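/- arXiv:2410.03407 — 2 statements merged into one kernel-verified Lean document; each statement's English description precedes it below -/
import Mathlib

section
/- Let d ≥ 1, L > 0, ε₀ > 0, and let R be the DJW18 randomizer with parameters (d, L, ε₀). For every x ∈ ℝ^d with ‖x‖₂ ≤ L, the variance of the output is bounded as E[‖R(x) − x‖₂²] ≤ L²·d·((3√π/4)·(e^{ε₀}+1)/(e^{ε₀}−1))². -/
open MeasureTheory

/-- `sign(t) = 1` if `t ≥ 0` and `−1` if `t < 0`. -/
noncomputable def sgn (t : ℝ) : ℝ := if t < 0 then -1 else 1

open Classical in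
/-- The unit direction of `x` (with the fixed unit vector `u` used for `x = 0`). -/
noncomputable def unitDir {d : ℕ} (u x : EuclideanSpace ℝ (Fin d)) :
    EuclideanSpace ℝ (Fin d) :=
  if x = 0 then u else ‖x‖⁻¹ • x

/-- The normalization constant `M = L·(√π/2)·(d·Γ((d+1)/2)/Γ(d/2 + 1))·((e^{ε₀}+1)/(e^{ε₀}−1))`
of the DJW18 randomizer. -/
noncomputable def djwM (d : ℕ) (L ε₀ : ℝ) : ℝ :=
  L * (Real.sqrt Real.pi / 2) *
    ((d : ℝ) * Real.Gamma (((d : ℝ) + 1) / 2) / Real.Gamma ((d : ℝ) / 2 + 1)) *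
    ((Real.exp ε₀ + 1) / (Real.exp ε₀ - 1))

/-- `σ` is the uniform probability measure on the unit sphere `S^{d−1} ⊂ ℝ^d`:
a probability measure concentrated on the unit sphere and invariant under every
linear isometry (rotation/reflection) of `ℝ^d`. -/
def IsUniformSphereMeasure {d : ℕ} (σ : Measure (EuclideanSpace ℝ (Fin d))) : Prop :=
  IsProbabilityMeasure σ ∧ (∀ᵐ v ∂σ, ‖v‖ = 1) ∧
    ∀ f : EuclideanSpace ℝ (Fin d) ≃ₗᵢ[ℝ] EuclideanSpace ℝ (Fin d), σ.map f = σ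

/-- The distribution of the output of the DJW18 randomizer with parameters
`(d, L, ε₀)` on input `x`: (i) `x̄ = ±L·x/‖x‖` with probabilities
`1/2 + ‖x‖/(2L)` and `1/2 − ‖x‖/(2L)`; (ii) `v` uniform on the unit sphere,
flipped so that `⟨v, x̄⟩ ≥ 0`; (iii) `U` Bernoulli with `Pr[U = 1] = e^{ε₀}/(e^{ε₀}+1)`;
(iv) output `(2U−1)·M·v`. Here `σ` is the uniform sphere measure and `u` the fixed
unit vector used in place of `x/‖x‖` for `x = 0`. -/
noncomputable def djw18 (d : ℕ) (L ε₀ : ℝ) (u : EuclideanSpace ℝ (Fin d))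
    (σ : Measure (EuclideanSpace ℝ (Fin d))) (x : EuclideanSpace ℝ (Fin d)) :
    Measure (EuclideanSpace ℝ (Fin d)) :=
  let M := djwM d L ε₀
  let pU := Real.exp ε₀ / (Real.exp ε₀ + 1)
  let pS := 1 / 2 + ‖x‖ / (2 * L)
  let out : ℝ → ℝ → EuclideanSpace ℝ (Fin d) → EuclideanSpace ℝ (Fin d) :=
    fun s c v => (c * M * sgn (s * (inner ℝ v (unitDir u x) : ℝ))) • v
  ENNReal.ofReal pS •
      (ENNReal.ofReal pU • σ.map (out 1 1) + ENNReal.ofReal (1 - pU) • σ.map (out 1 (-1))) +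
    ENNReal.ofReal (1 - pS) •
      (ENNReal.ofReal pU • σ.map (out (-1) 1) +
        ENNReal.ofReal (1 - pU) • σ.map (out (-1) (-1)))

/-! ### Auxiliary lemmas -/

lemma measurable_sgn : Measurable sgn := by
  unfold sgn
  exact Measurable.ite measurableSet_Iio measurable_const measurable_const

lemma sgn_mul_left (s t : ℝ) (hs : s = 1 ∨ s = -1) : sgn (s * t) * t = s * |t| := by
  rcases hs with rfl | rfl <;> unfold sgn <;> split_ifs with h <;>
    rcases abs_cases t with ⟨h1, h2⟩ | ⟨h1, h2⟩ <;> nlinarith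

lemma sgn_sq (t : ℝ) : sgn t * sgn t = 1 := by
  unfold sgn; split_ifs <;> norm_num

lemma gamma_midpoint (a b : ℝ) (ha : 0 < a) (hb : 0 < b) :
    Real.Gamma ((a+b)/2) ^ 2 ≤ Real.Gamma a * Real.Gamma b := by
  have h := Real.convexOn_log_Gamma.2 (Set.mem_Ioi.2 ha) (Set.mem_Ioi.2 hb)
    (by norm_num : (0:ℝ) ≤ 1/2) (by norm_num : (0:ℝ) ≤ 1/2) (by norm_num)
  simp only [smul_eq_mul, Function.comp] at h
  rw [show (1/2 : ℝ) * a + (1/2) * b = (a+b)/2 by ring] at h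
  have g1 : 0 < Real.Gamma a := Real.Gamma_pos_of_pos ha
  have g2 : 0 < Real.Gamma b := Real.Gamma_pos_of_pos hb
  have g3 : 0 < Real.Gamma ((a+b)/2) := Real.Gamma_pos_of_pos (by linarith)
  have h3 : Real.log (Real.Gamma ((a+b)/2) ^ 2) ≤ Real.log (Real.Gamma a * Real.Gamma b) := by
    rw [Real.log_pow, Real.log_mul (ne_of_gt g1) (ne_of_gt g2)]
    push_cast
    linarith
  exact (Real.log_le_log_iff (by positivity) (by positivity)).1 h3

lemma cd_bounds (d : ℕ) (hd : 1 ≤ d) :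
    0 < (d:ℝ) * Real.Gamma (((d:ℝ)+1)/2) / Real.Gamma ((d:ℝ)/2+1) ∧
    (d:ℝ) ≤ ((d:ℝ) * Real.Gamma (((d:ℝ)+1)/2) / Real.Gamma ((d:ℝ)/2+1))^2 ∧
    ((d:ℝ) * Real.Gamma (((d:ℝ)+1)/2) / Real.Gamma ((d:ℝ)/2+1))^2 ≤ 2*d := by
  have hd0 : (0:ℝ) < d := by exact_mod_cast hd
  have hd1 : (1:ℝ) ≤ d := by exact_mod_cast hd
  set t := (d:ℝ)/2 with ht
  have ht0 : 0 < t := by positivity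
  have hG1 : 0 < Real.Gamma t := Real.Gamma_pos_of_pos ht0
  have hG2 : 0 < Real.Gamma (t+1) := Real.Gamma_pos_of_pos (by linarith)
  have hG3 : 0 < Real.Gamma (t+1/2) := Real.Gamma_pos_of_pos (by linarith)
  have e1 : Real.Gamma (t+1) = t * Real.Gamma t := Real.Gamma_add_one (ne_of_gt ht0)
  have e2 : Real.Gamma (t+3/2) = (t+1/2) * Real.Gamma (t+1/2) := by
    rw [show t+3/2 = (t+1/2)+1 by ring]
    exact Real.Gamma_add_one (by positivity)
  have m1 : Real.Gamma (t+1/2)^2 ≤ Real.Gamma t * Real.Gamma (t+1) := by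
    have := gamma_midpoint t (t+1) ht0 (by linarith)
    rwa [show (t+(t+1))/2 = t+1/2 by ring] at this
  have m2 : Real.Gamma (t+1)^2 ≤ (t+1/2) * Real.Gamma (t+1/2)^2 := by
    have := gamma_midpoint (t+1/2) (t+3/2) (by positivity) (by linarith)
    rw [show ((t+1/2)+(t+3/2))/2 = t+1 by ring, e2] at this
    nlinarith
  have harg1 : ((d:ℝ)+1)/2 = t + 1/2 := by rw [ht]; ring
  have harg2 : (d:ℝ)/2 + 1 = t + 1 := by rw [ht]
  rw [harg1, harg2]
  refine ⟨by positivity, ?_, ?_⟩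
  · rw [div_pow, le_div_iff₀ (by positivity)]
    have hd2 : t + 1/2 ≤ (d:ℝ) := by rw [ht]; linarith
    nlinarith [m2, sq_nonneg (Real.Gamma (t+1/2)), mul_pos hd0 hd0]
  · rw [div_pow, div_le_iff₀ (by positivity)]
    have key : t * Real.Gamma (t+1/2)^2 ≤ Real.Gamma (t+1)^2 := by nlinarith [m1, e1]
    have hdt : (d:ℝ) = 2*t := by rw [ht]; ring
    nlinarith [key, mul_pos hd0 hd0, sq_nonneg (Real.Gamma (t+1))]

lemma cubic_ineq (s : ℝ) (hs : 1 ≤ s) :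
    s - Real.sqrt Real.pi ≤ (Real.pi/16) * s^3 := by
  have hp0 : 0 ≤ Real.sqrt Real.pi := Real.sqrt_nonneg _
  have hp2 : Real.sqrt Real.pi ^ 2 = Real.pi := Real.sq_sqrt Real.pi_pos.le
  have hπ : 3.141592 < Real.pi := Real.pi_gt_d6
  have hp : 1.77 ≤ Real.sqrt Real.pi := by nlinarith
  have hs0 : (0:ℝ) ≤ s := by linarith
  rcases le_or_gt s 3 with h3 | h3
  · nlinarith [mul_nonneg hs0 (sq_nonneg (s - 13/10)), sq_nonneg (s - 13/10)]
  · have h9 : (9:ℝ) ≤ s^2 := by nlinarith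
    nlinarith [mul_nonneg hs0 (by nlinarith : (0:ℝ) ≤ s^2 - 9)]

lemma final_arith' (d : ℕ) (hd : 1 ≤ d) (L q cd K p : ℝ) (hL : 0 < L) (hq0 : 0 ≤ q)
    (hq : q ≤ L) (hcd0 : 0 < cd) (hcd1 : (d:ℝ) ≤ cd^2) (hcd2 : cd^2 ≤ 2*d) (hK : 1 ≤ K)
    (hp0 : 0 < p) (hp2 : p^2 = Real.pi) :
    (L * (p / 2) * cd * K)^2 + q^2 - q^2 * p * cd / d ≤ L^2 * d * ((3 * p / 4) * K)^2 := by
  have hd0 : (0:ℝ) < d := by exact_mod_cast hd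
  have hK0 : 0 < K := by linarith
  have hq2 : q^2 ≤ L^2 := by nlinarith
  rcases le_or_gt 1 (p * cd / (d:ℝ)) with hcase | hcase
  · have h1 : q^2 - q^2 * p * cd / d ≤ 0 := by
      have h' : q^2 * 1 ≤ q^2 * (p*cd/d) := mul_le_mul_of_nonneg_left hcase (sq_nonneg q)
      have he : q^2 * (p*cd/d) = q^2*p*cd/d := by ring
      linarith [he ▸ h']
    have h2 : (L*(p/2)*cd*K)^2 ≤ L^2*d*((3*p/4)*K)^2 := by
      have key : L^2*(d:ℝ)*((3*p/4)*K)^2 - (L*(p/2)*cd*K)^2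
          = (1/16)*((L^2*K^2*p^2)*(9*(d:ℝ)-4*cd^2)) := by ring
      have hnn : (0:ℝ) ≤ (L^2*K^2*p^2)*(9*(d:ℝ)-4*cd^2) :=
        mul_nonneg (by positivity) (by linarith)
      linarith
    linarith
  · obtain ⟨s, hs0', hs2, hs1⟩ : ∃ s : ℝ, 0 < s ∧ s^2 = (d:ℝ) ∧ 1 ≤ s := by
      refine ⟨Real.sqrt d, Real.sqrt_pos.2 hd0, Real.sq_sqrt hd0.le, ?_⟩
      rw [show (1:ℝ) = Real.sqrt 1 by simp]
      exact Real.sqrt_le_sqrt (by exact_mod_cast hd)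
    have hpeq : p = Real.sqrt Real.pi := by
      rw [← hp2, Real.sqrt_sq hp0.le]
    have hscd : s ≤ cd := by
      have h' : s ≤ Real.sqrt (cd^2) := by
        rw [← hs2] at hcd1
        calc s = Real.sqrt (s^2) := (Real.sqrt_sq hs0'.le).symm
          _ ≤ Real.sqrt (cd^2) := Real.sqrt_le_sqrt hcd1
      rwa [Real.sqrt_sq hcd0.le] at h'
    have hcub : s - p ≤ (p^2/16) * s^3 := by
      have h' := cubic_ineq s hs1
      rw [← hpeq, ← hp2] at h'
      exact h'
    have h5 : p/s ≤ p*cd/d := by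
      rw [div_le_div_iff₀ hs0' hd0]
      have h51 : p*s*s ≤ p*s*cd := mul_le_mul_of_nonneg_left hscd (by positivity)
      nlinarith [h51, hs2]
    have h7 : 1 - p/s ≤ (p^2/16)*s^2 := by
      have h := mul_le_mul_of_nonneg_right hcub (le_of_lt (inv_pos.2 hs0'))
      have e1 : (s - p) * s⁻¹ = 1 - p/s := by field_simp
      have e2 : ((p^2/16)*s^3) * s⁻¹ = (p^2/16)*s^2 := by field_simp
      rw [e1, e2] at h
      exact h
    have h6 : q^2 - q^2*p*cd/d ≤ L^2*((p^2/16)*s^2) := by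
      have e3 : q^2 - q^2*p*cd/d = q^2*(1-p*cd/d) := by ring
      rw [e3]
      calc q^2*(1-p*cd/d) ≤ L^2*(1-p*cd/d) :=
            mul_le_mul_of_nonneg_right hq2 (by linarith)
        _ ≤ L^2*(1-p/s) := mul_le_mul_of_nonneg_left (by linarith) (by positivity)
        _ ≤ L^2*((p^2/16)*s^2) := mul_le_mul_of_nonneg_left h7 (by positivity)
    have hM2 : (L*(p/2)*cd*K)^2 ≤ L^2*(p^2/2)*d*K^2 := by
      have key : L^2*(p^2/2)*(d:ℝ)*K^2 - (L*(p/2)*cd*K)^2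
          = (1/4)*((L^2*K^2*p^2)*(2*(d:ℝ)-cd^2)) := by ring
      have hnn : (0:ℝ) ≤ (L^2*K^2*p^2)*(2*(d:ℝ)-cd^2) :=
        mul_nonneg (by positivity) (by linarith)
      linarith
    have htgt : L^2*(p^2/2)*d*K^2 + L^2*((p^2/16)*s^2) ≤ L^2*d*((3*p/4)*K)^2 := by
      rw [hs2]
      have key : L^2*(d:ℝ)*((3*p/4)*K)^2 - (L^2*(p^2/2)*(d:ℝ)*K^2 + L^2*((p^2/16)*(d:ℝ)))
          = (1/16)*((L^2*(d:ℝ)*p^2)*(K^2-1)) := by ring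
      have hnn : (0:ℝ) ≤ (L^2*(d:ℝ)*p^2)*(K^2-1) :=
        mul_nonneg (by positivity) (by nlinarith)
      linarith
    linarith

lemma bdd_integrable {d : ℕ} (σ : Measure (EuclideanSpace ℝ (Fin d))) [IsProbabilityMeasure σ]
    {g : EuclideanSpace ℝ (Fin d) → ℝ} (hg : Measurable g) (C : ℝ)
    (hb : ∀ᵐ v ∂σ, ‖g v‖ ≤ C) : Integrable g σ :=
  Integrable.mono' (integrable_const C) hg.aestronglyMeasurable hb

lemma inner_sq_integral {d : ℕ} (hd : 1 ≤ d) (σ : Measure (EuclideanSpace ℝ (Fin d)))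
    (hσ : IsUniformSphereMeasure σ) (e : EuclideanSpace ℝ (Fin d)) (he : ‖e‖ = 1) :
    ∫ v, (inner ℝ v e : ℝ)^2 ∂σ = 1/d := by
  haveI : IsProbabilityMeasure σ := hσ.1
  have hcard : Module.finrank ℝ (EuclideanSpace ℝ (Fin d)) = Fintype.card (Fin d) := by
    simp [finrank_euclideanSpace]
  have horth : Orthonormal ℝ (Set.restrict {(⟨0, hd⟩ : Fin d)} (fun _ => e)) := by
    rw [orthonormal_iff_ite]
    rintro ⟨i, hi⟩ ⟨j, hj⟩
    simp only [Set.mem_singleton_iff] at hi hj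
    subst hi; subst hj
    have h1 : (inner ℝ e e : ℝ) = 1 := by
      rw [real_inner_self_eq_norm_sq, he]; norm_num
    simp; exact Or.inl he
  obtain ⟨b, hb⟩ := horth.exists_orthonormalBasis_extension_of_card_eq hcard
  have hmeas : ∀ w : EuclideanSpace ℝ (Fin d), Measurable (fun v => (inner ℝ v w : ℝ)^2) := by
    intro w
    exact ((continuous_id.inner continuous_const).pow 2).measurable
  have hint : ∀ w : EuclideanSpace ℝ (Fin d), ‖w‖ = 1 →
      Integrable (fun v => (inner ℝ v w : ℝ)^2) σ := by
    intro w hw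
    refine bdd_integrable σ (hmeas w) 1 ?_
    filter_upwards [hσ.2.1] with v hv
    have := abs_real_inner_le_norm v w
    rw [Real.norm_eq_abs, abs_pow, hv, hw] at *
    nlinarith [abs_nonneg (inner ℝ v w : ℝ)]
  have hsame : ∀ i : Fin d, ∫ v, (inner ℝ v (b i) : ℝ)^2 ∂σ = ∫ v, (inner ℝ v e : ℝ)^2 ∂σ := by
    intro i
    have hne : ‖e‖ = ‖b i‖ := by rw [he, b.orthonormal.1 i]
    set f := Submodule.reflection (ℝ ∙ (e - b i))ᗮ with hf
    have hfe : f e = b i := Submodule.reflection_sub hne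
    have hmap : σ.map f = σ := hσ.2.2 f
    calc ∫ v, (inner ℝ v (b i) : ℝ)^2 ∂σ
        = ∫ v, (inner ℝ v (b i) : ℝ)^2 ∂(σ.map f) := by rw [hmap]
      _ = ∫ v, (inner ℝ (f v) (b i) : ℝ)^2 ∂σ := by
          rw [integral_map (f.continuous.measurable.aemeasurable)
            (hmeas (b i)).aestronglyMeasurable]
      _ = ∫ v, (inner ℝ v e : ℝ)^2 ∂σ := by
          congr 1; funext v
          rw [← hfe, LinearIsometryEquiv.inner_map_map]
  have hsum : ∑ i : Fin d, ∫ v, (inner ℝ v (b i) : ℝ)^2 ∂σ = 1 := by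
    rw [← integral_finset_sum _ (fun i _ => hint (b i) (b.orthonormal.1 i))]
    have hae : ∀ᵐ v ∂σ, ∑ i : Fin d, (inner ℝ v (b i) : ℝ)^2 = 1 := by
      filter_upwards [hσ.2.1] with v hv
      have hP := b.sum_inner_mul_inner v v
      have h2 : ∑ i : Fin d, (inner ℝ v (b i) : ℝ)^2 = (inner ℝ v v : ℝ) := by
        rw [← hP]
        refine Finset.sum_congr rfl fun i _ => ?_
        rw [sq, real_inner_comm (b i) v]
      rw [h2, real_inner_self_eq_norm_sq, hv]; norm_num
    rw [integral_congr_ae hae]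
    simp
  rw [Finset.sum_congr rfl (fun i _ => hsame i)] at hsum
  simp only [Finset.sum_const, Finset.card_univ, Fintype.card_fin, nsmul_eq_mul] at hsum
  have hd0 : (d:ℝ) ≠ 0 := by positivity
  field_simp at hsum ⊢
  linarith

lemma djw_piece {d : ℕ} (σ : Measure (EuclideanSpace ℝ (Fin d))) [IsProbabilityMeasure σ]
    (hsph : ∀ᵐ v ∂σ, ‖v‖ = 1) (x e : EuclideanSpace ℝ (Fin d)) (he : ‖e‖ = 1)
    (hxe : ∀ v : EuclideanSpace ℝ (Fin d), (inner ℝ v x : ℝ) = ‖x‖ * (inner ℝ v e : ℝ))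
    (M s c : ℝ) (hs : s = 1 ∨ s = -1) (hc : c = 1 ∨ c = -1) :
    Integrable (fun y => ‖y - x‖^2)
        (σ.map (fun v => (c * M * sgn (s * (inner ℝ v e : ℝ))) • v)) ∧
    ∫ y, ‖y - x‖^2 ∂(σ.map (fun v => (c * M * sgn (s * (inner ℝ v e : ℝ))) • v)) =
      M^2 + ‖x‖^2 - (2*c*M*s*‖x‖) * ∫ v, |(inner ℝ v e : ℝ)| ∂σ := by
  set g := fun v : EuclideanSpace ℝ (Fin d) => (c * M * sgn (s * (inner ℝ v e : ℝ))) • v with hg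
  have hginner : Measurable fun v : EuclideanSpace ℝ (Fin d) => (inner ℝ v e : ℝ) :=
    (continuous_id.inner continuous_const).measurable
  have hgm : Measurable g :=
    ((measurable_sgn.comp (hginner.const_mul s)).const_mul (c*M)).smul measurable_id
  have hfc : Continuous fun y : EuclideanSpace ℝ (Fin d) => ‖y - x‖^2 :=
    ((continuous_id.sub continuous_const).norm).pow 2
  have hfae : AEStronglyMeasurable (fun y : EuclideanSpace ℝ (Fin d) => ‖y - x‖^2) (σ.map g) :=
    hfc.aestronglyMeasurable
  have hpt : ∀ v : EuclideanSpace ℝ (Fin d), ‖v‖ = 1 →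
      ‖g v - x‖^2 = M^2 + ‖x‖^2 - (2*c*M*s*‖x‖) * |(inner ℝ v e : ℝ)| := by
    intro v hv
    have hns : ‖g v - x‖^2 = ‖g v‖^2 - 2 * (inner ℝ (g v) x : ℝ) + ‖x‖^2 :=
      norm_sub_sq_real _ _
    have hc2 : c * c = 1 := by rcases hc with rfl | rfl <;> norm_num
    have h1 : ‖g v‖^2 = M^2 := by
      rw [hg]
      simp only [norm_smul, Real.norm_eq_abs, hv, mul_one, mul_pow, sq_abs]
      have e1 : sgn (s * (inner ℝ v e : ℝ))^2 = 1 := by rw [sq]; exact sgn_sq _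
      have e2 : c^2 = (1:ℝ) := by rw [sq]; exact hc2
      rw [e1, e2]; ring
    have h2 : (inner ℝ (g v) x : ℝ) = c*M*s*‖x‖*|(inner ℝ v e : ℝ)| := by
      rw [hg]
      simp only [real_inner_smul_left]
      rw [hxe v]
      have h3 := sgn_mul_left s (inner ℝ v e : ℝ) hs
      linear_combination (c * M * ‖x‖) * h3
    rw [hns, h1, h2]; ring
  have haeeq : (fun v => ‖g v - x‖^2)
      =ᵐ[σ] fun v => M^2 + ‖x‖^2 - (2*c*M*s*‖x‖) * |(inner ℝ v e : ℝ)| :=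
    hsph.mono fun v hv => hpt v hv
  have hintabs : Integrable (fun v : EuclideanSpace ℝ (Fin d) => |(inner ℝ v e : ℝ)|) σ := by
    refine Integrable.mono' (integrable_const 1) hginner.abs.aestronglyMeasurable ?_
    filter_upwards [hsph] with v hv
    rw [Real.norm_eq_abs, abs_abs]
    calc |(inner ℝ v e : ℝ)| ≤ ‖v‖ * ‖e‖ := abs_real_inner_le_norm v e
      _ = 1 := by rw [hv, he]; ring
  have hint2 : Integrable
      (fun v => M^2 + ‖x‖^2 - (2*c*M*s*‖x‖) * |(inner ℝ v e : ℝ)|) σ :=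
    (integrable_const _).sub (hintabs.const_mul _)
  have hint1 : Integrable (fun v => ‖g v - x‖^2) σ := hint2.congr haeeq.symm
  constructor
  · exact (integrable_map_measure hfae hgm.aemeasurable).2 hint1
  · rw [integral_map hgm.aemeasurable hfae]
    rw [integral_congr_ae haeeq,
      integral_sub (integrable_const _) (hintabs.const_mul _),
      integral_const, MeasureTheory.integral_const_mul]
    simp [measure_univ]

set_option maxHeartbeats 2000000 in
/-- variance bound for the DJW18 randomizer: for every `x` with
`‖x‖₂ ≤ L`, `E[‖R(x) − x‖₂²] ≤ L²·d·((3√π/4)·(e^{ε₀}+1)/(e^{ε₀}−1))²`. -/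
theorem djw18_variance_bound (d : ℕ) (hd : 1 ≤ d) (L ε₀ : ℝ) (hL : 0 < L) (hε₀ : 0 < ε₀)
    (u : EuclideanSpace ℝ (Fin d)) (hu : ‖u‖ = 1)
    (σ : Measure (EuclideanSpace ℝ (Fin d))) (hσ : IsUniformSphereMeasure σ)
    (x : EuclideanSpace ℝ (Fin d)) (hx : ‖x‖ ≤ L) :
    ∫ y, ‖y - x‖ ^ 2 ∂(djw18 d L ε₀ u σ x) ≤
      L ^ 2 * d *
        ((3 * Real.sqrt Real.pi / 4) * ((Real.exp ε₀ + 1) / (Real.exp ε₀ - 1))) ^ 2 := by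
  obtain ⟨hprob, hsph, hinv⟩ := hσ
  haveI : IsProbabilityMeasure σ := hprob
  have hd0 : (0:ℝ) < d := by exact_mod_cast hd
  have hEgt : (1:ℝ) < Real.exp ε₀ := by
    rw [← Real.exp_zero]; exact Real.exp_lt_exp.2 hε₀
  have hE1 : Real.exp ε₀ + 1 ≠ 0 := by positivity
  have hE2 : (0:ℝ) < Real.exp ε₀ - 1 := by linarith
  have he : ‖unitDir u x‖ = 1 := by
    unfold unitDir
    split_ifs with h
    · exact hu
    · rw [norm_smul, norm_inv, norm_norm, inv_mul_cancel₀ (norm_ne_zero_iff.2 h)]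
  have hxe : ∀ v : EuclideanSpace ℝ (Fin d),
      (inner ℝ v x : ℝ) = ‖x‖ * (inner ℝ v (unitDir u x) : ℝ) := by
    intro v
    unfold unitDir
    split_ifs with h
    · simp [h]
    · rw [real_inner_smul_right, ← mul_assoc,
        mul_inv_cancel₀ (norm_ne_zero_iff.2 h), one_mul]
  -- nonnegativity of the four weights
  have hpS0 : (0:ℝ) ≤ 1/2 + ‖x‖/(2*L) := by positivity
  have hpS1 : (0:ℝ) ≤ 1 - (1/2 + ‖x‖/(2*L)) := by
    have : ‖x‖/(2*L) ≤ 1/2 := by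
      rw [div_le_iff₀ (by positivity)]; linarith
    linarith
  have hpU0 : (0:ℝ) ≤ Real.exp ε₀ / (Real.exp ε₀ + 1) := by positivity
  have hpU1 : (0:ℝ) ≤ 1 - Real.exp ε₀ / (Real.exp ε₀ + 1) := by
    have : Real.exp ε₀ / (Real.exp ε₀ + 1) ≤ 1 := by
      rw [div_le_one (by positivity)]; linarith
    linarith
  -- the four pieces
  obtain ⟨i11, e11⟩ := djw_piece σ hsph x (unitDir u x) he hxe (djwM d L ε₀)
    1 1 (Or.inl rfl) (Or.inl rfl)
  obtain ⟨i12, e12⟩ := djw_piece σ hsph x (unitDir u x) he hxe (djwM d L ε₀)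
    1 (-1) (Or.inl rfl) (Or.inr rfl)
  obtain ⟨i21, e21⟩ := djw_piece σ hsph x (unitDir u x) he hxe (djwM d L ε₀)
    (-1) 1 (Or.inr rfl) (Or.inl rfl)
  obtain ⟨i22, e22⟩ := djw_piece σ hsph x (unitDir u x) he hxe (djwM d L ε₀)
    (-1) (-1) (Or.inr rfl) (Or.inr rfl)
  have hmeq : djw18 d L ε₀ u σ x =
      ENNReal.ofReal (1/2 + ‖x‖/(2*L)) •
        (ENNReal.ofReal (Real.exp ε₀ / (Real.exp ε₀ + 1)) •
            σ.map (fun v => ((1:ℝ) * djwM d L ε₀ * sgn ((1:ℝ) * (inner ℝ v (unitDir u x) : ℝ))) • v) +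
          ENNReal.ofReal (1 - Real.exp ε₀ / (Real.exp ε₀ + 1)) •
            σ.map (fun v => ((-1:ℝ) * djwM d L ε₀ * sgn ((1:ℝ) * (inner ℝ v (unitDir u x) : ℝ))) • v)) +
      ENNReal.ofReal (1 - (1/2 + ‖x‖/(2*L))) •
        (ENNReal.ofReal (Real.exp ε₀ / (Real.exp ε₀ + 1)) •
            σ.map (fun v => ((1:ℝ) * djwM d L ε₀ * sgn ((-1:ℝ) * (inner ℝ v (unitDir u x) : ℝ))) • v) +
          ENNReal.ofReal (1 - Real.exp ε₀ / (Real.exp ε₀ + 1)) •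
            σ.map (fun v => ((-1:ℝ) * djwM d L ε₀ * sgn ((-1:ℝ) * (inner ℝ v (unitDir u x) : ℝ))) • v)) := rfl
  have hA1 := i11.smul_measure (c := ENNReal.ofReal (Real.exp ε₀ / (Real.exp ε₀ + 1))) ENNReal.ofReal_ne_top
  have hA2 := i12.smul_measure (c := ENNReal.ofReal (1 - Real.exp ε₀ / (Real.exp ε₀ + 1))) ENNReal.ofReal_ne_top
  have hB1 := i21.smul_measure (c := ENNReal.ofReal (Real.exp ε₀ / (Real.exp ε₀ + 1))) ENNReal.ofReal_ne_top
  have hB2 := i22.smul_measure (c := ENNReal.ofReal (1 - Real.exp ε₀ / (Real.exp ε₀ + 1))) ENNReal.ofReal_ne_top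
  have hA := hA1.add_measure hA2
  have hB := hB1.add_measure hB2
  have hAS := hA.smul_measure (c := ENNReal.ofReal (1/2 + ‖x‖/(2*L))) ENNReal.ofReal_ne_top
  have hBS := hB.smul_measure (c := ENNReal.ofReal (1 - (1/2 + ‖x‖/(2*L)))) ENNReal.ofReal_ne_top
  rw [hmeq, integral_add_measure hAS hBS, integral_smul_measure, integral_smul_measure,
    integral_add_measure hA1 hA2, integral_add_measure hB1 hB2,
    integral_smul_measure, integral_smul_measure, integral_smul_measure, integral_smul_measure,
    e11, e12, e21, e22,
    ENNReal.toReal_ofReal hpS0, ENNReal.toReal_ofReal hpS1,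
    ENNReal.toReal_ofReal hpU0, ENNReal.toReal_ofReal hpU1]
  simp only [smul_eq_mul]
  -- abbreviations
  set A := ∫ v, |(inner ℝ v (unitDir u x) : ℝ)| ∂σ with hAdef
  -- lower bound on A
  have hαlb : 1/(d:ℝ) ≤ A := by
    rw [hAdef, ← inner_sq_integral hd σ ⟨hprob, hsph, hinv⟩ (unitDir u x) he]
    have hginner : Measurable fun v : EuclideanSpace ℝ (Fin d) => (inner ℝ v (unitDir u x) : ℝ) :=
      (continuous_id.inner continuous_const).measurable
    have hintsq : Integrable (fun v => (inner ℝ v (unitDir u x) : ℝ)^2) σ := by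
      refine bdd_integrable σ (hginner.pow_const 2) 1 ?_
      filter_upwards [hsph] with v hv
      have h1 := abs_real_inner_le_norm v (unitDir u x)
      rw [hv, he, mul_one] at h1
      rw [Real.norm_eq_abs, abs_pow]
      nlinarith [abs_nonneg (inner ℝ v (unitDir u x) : ℝ)]
    have hintabs : Integrable (fun v : EuclideanSpace ℝ (Fin d) => |(inner ℝ v (unitDir u x) : ℝ)|) σ := by
      refine bdd_integrable σ hginner.abs 1 ?_
      filter_upwards [hsph] with v hv
      have h1 := abs_real_inner_le_norm v (unitDir u x)
      rw [hv, he, mul_one] at h1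
      rwa [Real.norm_eq_abs, abs_abs]
    refine integral_mono_ae hintsq hintabs ?_
    filter_upwards [hsph] with v hv
    have h1 := abs_real_inner_le_norm v (unitDir u x)
    rw [hv, he, mul_one] at h1
    calc (inner ℝ v (unitDir u x) : ℝ)^2 = |(inner ℝ v (unitDir u x) : ℝ)|^2 := (sq_abs _).symm
      _ ≤ |(inner ℝ v (unitDir u x) : ℝ)| := by
          nlinarith [abs_nonneg (inner ℝ v (unitDir u x) : ℝ)]
  -- structural constants
  obtain ⟨hcd0, hcd1, hcd2⟩ := cd_bounds d hd
  have hp0 : (0:ℝ) < Real.sqrt Real.pi := Real.sqrt_pos.2 Real.pi_pos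
  have hp2 : Real.sqrt Real.pi ^ 2 = Real.pi := Real.sq_sqrt Real.pi_pos.le
  have hK1 : (1:ℝ) ≤ (Real.exp ε₀ + 1) / (Real.exp ε₀ - 1) := by
    rw [le_div_iff₀ hE2]; linarith
  have hMdef : djwM d L ε₀ = L * (Real.sqrt Real.pi / 2) *
      ((d:ℝ) * Real.Gamma (((d:ℝ)+1)/2) / Real.Gamma ((d:ℝ)/2+1)) *
      ((Real.exp ε₀ + 1) / (Real.exp ε₀ - 1)) := rfl
  have hM0 : 0 < djwM d L ε₀ := by
    rw [hMdef]
    have : (0:ℝ) < (Real.exp ε₀ + 1) / (Real.exp ε₀ - 1) := by positivity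
    positivity
  -- the collapsed expression
  set C := 2 * djwM d L ε₀ * ‖x‖^2 * ((Real.exp ε₀ - 1)/((Real.exp ε₀ + 1)*L)) with hCdef
  have hC0 : 0 ≤ C := by
    rw [hCdef]
    positivity
  have step : djwM d L ε₀ ^2 + ‖x‖^2 - C * (1/(d:ℝ)) ≤
      L ^ 2 * d * ((3 * Real.sqrt Real.pi / 4) * ((Real.exp ε₀ + 1) / (Real.exp ε₀ - 1))) ^ 2 := by
    have hform : djwM d L ε₀ ^2 + ‖x‖^2 - C * (1/(d:ℝ)) =
        (L * (Real.sqrt Real.pi / 2) *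
            ((d:ℝ) * Real.Gamma (((d:ℝ)+1)/2) / Real.Gamma ((d:ℝ)/2+1)) *
            ((Real.exp ε₀ + 1) / (Real.exp ε₀ - 1)))^2 + ‖x‖^2 -
          ‖x‖^2 * Real.sqrt Real.pi *
            ((d:ℝ) * Real.Gamma (((d:ℝ)+1)/2) / Real.Gamma ((d:ℝ)/2+1)) / (d:ℝ) := by
      rw [hCdef, hMdef]
      have hG2 : (0:ℝ) < Real.Gamma ((d:ℝ)/2+1) := Real.Gamma_pos_of_pos (by positivity)
      field_simp
    rw [hform]
    exact final_arith' d hd L ‖x‖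
      ((d:ℝ) * Real.Gamma (((d:ℝ)+1)/2) / Real.Gamma ((d:ℝ)/2+1))
      ((Real.exp ε₀ + 1) / (Real.exp ε₀ - 1)) (Real.sqrt Real.pi)
      hL (norm_nonneg x) hx hcd0 hcd1 hcd2 hK1 hp0 hp2
  refine le_trans ?_ step
  have hmono : C * (1/(d:ℝ)) ≤ C * A := mul_le_mul_of_nonneg_left hαlb hC0
  have hcollapse : (1/2 + ‖x‖/(2*L)) *
      (Real.exp ε₀ / (Real.exp ε₀ + 1) *
          (djwM d L ε₀^2 + ‖x‖^2 - 2*1*djwM d L ε₀*1*‖x‖ * A) +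
        (1 - Real.exp ε₀ / (Real.exp ε₀ + 1)) *
          (djwM d L ε₀^2 + ‖x‖^2 - 2*(-1)*djwM d L ε₀*1*‖x‖ * A)) +
      (1 - (1/2 + ‖x‖/(2*L))) *
      (Real.exp ε₀ / (Real.exp ε₀ + 1) *
          (djwM d L ε₀^2 + ‖x‖^2 - 2*1*djwM d L ε₀*(-1)*‖x‖ * A) +
        (1 - Real.exp ε₀ / (Real.exp ε₀ + 1)) *
          (djwM d L ε₀^2 + ‖x‖^2 - 2*(-1)*djwM d L ε₀*(-1)*‖x‖ * A)) =
      djwM d L ε₀^2 + ‖x‖^2 - C * A := by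
    rw [hCdef]
    field_simp
    ring
  rw [hcollapse]
  linarith
end

section
/- Let d ≥ 1 and let σ be the uniform probability measure on the unit sphere S^{d−1} ⊂ ℝ^d. For every unit vector u ∈ ℝ^d, the vector-valued integral ∫_{S^{d−1}} sign(⟨v, u⟩)·v dσ(v) equals (Γ(d/2)/(√π·Γ((d+1)/2)))·u, where sign(t) = 1 if t ≥ 0 and sign(t) = −1 if t < 0. -/
open MeasureTheory

open Metric Set Real

lemma radial (s : ℕ) : ∫ x in Ioi (0:ℝ), x ^ s * Real.exp (-x^2)
    = Real.Gamma (((s:ℝ)+1)/2) / 2 := by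
  have ha : (0:ℝ) < ((s:ℝ)+1)/2 := by positivity
  have key := integral_comp_rpow_Ioi_of_pos
    (g := fun y => Real.exp (-y) * y ^ (((s:ℝ)+1)/2 - 1)) two_pos
  rw [Real.Gamma_eq_integral ha, ← key,
    eq_div_iff (two_ne_zero (α := ℝ)), ← MeasureTheory.integral_mul_const]
  refine setIntegral_congr_fun measurableSet_Ioi (fun x hx => ?_)
  have hx : (0:ℝ) < x := hx
  have e1 : x ^ (2:ℝ) = x ^ 2 := by rw [← Real.rpow_natCast x 2]; norm_num
  have e2 : x ^ ((2:ℝ)-1) = x := by norm_num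
  have e3 : (x ^ (2:ℝ)) ^ (((s:ℝ)+1)/2-1) = x ^ ((s:ℝ)-1) := by
    rw [← Real.rpow_mul hx.le]
    congr 1; ring
  have e4 : x * x ^ ((s:ℝ)-1) = x ^ (s:ℕ) := by
    rw [Real.rpow_sub hx, Real.rpow_one, mul_div_cancel₀ _ hx.ne',
      Real.rpow_natCast]
  rw [smul_eq_mul, e2, e3, e1, ← e4]
  ring

lemma integral_volumeIoiPow (n : ℕ) (h : ℝ → ℝ) :
    ∫ x : Ioi (0:ℝ), h x ∂(Measure.volumeIoiPow n) = ∫ r in Ioi (0:ℝ), r ^ n * h r := by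
  simp only [Measure.volumeIoiPow, ENNReal.ofReal]
  rw [integral_withDensity_eq_integral_smul ((measurable_subtype_coe.pow_const _).real_toNNReal),
    integral_subtype_comap measurableSet_Ioi fun a => Real.toNNReal (a ^ n) • h a]
  refine setIntegral_congr_fun measurableSet_Ioi fun x hx => ?_
  rw [NNReal.smul_def, Real.coe_toNNReal _ (pow_nonneg hx.out.le _), smul_eq_mul]

variable {E : Type*} [NormedAddCommGroup E] [NormedSpace ℝ E] [MeasurableSpace E]
  [BorelSpace E] [FiniteDimensional ℝ E] [Nontrivial E]

lemma polar (μ : Measure E) [μ.IsAddHaarMeasure] (F : E → ℝ) :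
    ∫ x, F x ∂μ = ∫ p : sphere (0:E) 1 × Ioi (0:ℝ), F ((p.2 : ℝ) • (p.1 : E))
      ∂(μ.toSphere.prod (Measure.volumeIoiPow (Module.finrank ℝ E - 1))) := by
  have h1 : ∫ x, F x ∂μ = ∫ x : ({(0:E)}ᶜ : Set E), F x.1 ∂(μ.comap Subtype.val) := by
    rw [integral_subtype_comap (measurableSet_singleton _).compl F,
      MeasureTheory.restrict_compl_singleton]
  rw [h1, ← (μ.measurePreserving_homeomorphUnitSphereProd).integral_comp
      (Homeomorph.measurableEmbedding _) (fun p => F ((p.2 : ℝ) • (p.1 : E)))]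
  have : ∀ x : ({(0:E)}ᶜ : Set E),
      ((homeomorphUnitSphereProd E x).2 : ℝ) • ((homeomorphUnitSphereProd E x).1 : E) = x.1 := by
    intro x
    simp only [homeomorphUnitSphereProd_apply_fst_coe, homeomorphUnitSphereProd_apply_snd_coe]
    exact smul_inv_smul₀ (norm_ne_zero_iff.2 x.2) x.1
  simp only [this]

lemma oneD_gauss : ∫ x : ℝ, Real.exp (-x^2) = Real.sqrt π := by
  simpa using integral_gaussian 1

lemma oneD_abs : ∫ x : ℝ, |x| * Real.exp (-x^2) = 1 := by
  have h : ∀ x : ℝ, |x| * Real.exp (-x^2) = (fun t => t * Real.exp (-t^2)) |x| := by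
    intro x; simp only [← sq_abs x]
  simp only [h]
  rw [integral_comp_abs (f := fun t => t * Real.exp (-t^2))]
  have := radial 1
  simp only [pow_one] at this
  rw [this]
  norm_num [Real.Gamma_one]

lemma gauss_prod (d : ℕ) (i₀ : Fin d) :
    ∫ x : EuclideanSpace ℝ (Fin d), |x i₀| * Real.exp (-‖x‖^2)
      = Real.sqrt π ^ (d - 1) := by
  rw [← MeasurePreserving.integral_comp' (f := (MeasurableEquiv.toLp 2 (Fin d → ℝ)))
    ((EuclideanSpace.volume_preserving_symm_measurableEquiv_toLp (Fin d)).symm)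
    (g := fun x : EuclideanSpace ℝ (Fin d) => |x i₀| * Real.exp (-‖x‖^2))]
  have key : ∀ y : Fin d → ℝ,
      |((MeasurableEquiv.toLp 2 (Fin d → ℝ)) y) i₀|
        * Real.exp (-‖(MeasurableEquiv.toLp 2 (Fin d → ℝ)) y‖^2)
      = ∏ i, (fun i t => (if i = i₀ then |t| else 1) * Real.exp (-t^2)) i (y i) := by
    intro y
    have h1 : ((MeasurableEquiv.toLp 2 (Fin d → ℝ)) y) i₀ = y i₀ := rfl
    have h2 : ‖(MeasurableEquiv.toLp 2 (Fin d → ℝ)) y‖^2 = ∑ i, (y i)^2 := by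
      rw [PiLp.norm_sq_eq_of_L2]
      refine Finset.sum_congr rfl fun i _ => ?_
      rw [Real.norm_eq_abs, sq_abs]; rfl
    rw [h1, h2, Finset.prod_mul_distrib, Finset.prod_ite_eq' Finset.univ i₀ (fun i => |y i|),
      ← Real.exp_sum]
    simp [Finset.sum_neg_distrib]
  simp only [key]
  rw [MeasureTheory.integral_fintype_prod_volume_eq_prod
    (f := fun i t => (if i = i₀ then |t| else 1) * Real.exp (-t^2))]
  have hv : ∀ i : Fin d, (∫ t : ℝ, (if i = i₀ then |t| else 1) * Real.exp (-t^2))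
      = if i = i₀ then 1 else Real.sqrt π := by
    intro i
    by_cases h : i = i₀ <;> simp only [h, if_true, if_false, ite_true, ite_false, one_mul]
    · exact oneD_abs
    · exact oneD_gauss
  simp only [hv]
  rw [← Finset.prod_erase_mul Finset.univ _ (Finset.mem_univ i₀), if_pos rfl, mul_one]
  rw [Finset.prod_congr rfl (fun i hi => if_neg (Finset.ne_of_mem_erase hi)),
    Finset.prod_const, Finset.card_erase_of_mem (Finset.mem_univ i₀), Finset.card_univ,
    Fintype.card_fin]

lemma gauss_inner (d : ℕ) (hd : 1 ≤ d) (w : EuclideanSpace ℝ (Fin d)) (hw : ‖w‖ = 1) :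
    ∫ x : EuclideanSpace ℝ (Fin d), |(inner ℝ x w : ℝ)| * Real.exp (-‖x‖^2)
      = Real.sqrt π ^ (d - 1) := by
  set i₀ : Fin d := ⟨0, hd⟩
  set w₀ : EuclideanSpace ℝ (Fin d) := EuclideanSpace.single i₀ (1:ℝ) with hw₀def
  have hw₀ : ‖w₀‖ = 1 := by
    rw [hw₀def, EuclideanSpace.norm_single]; norm_num
  set f : EuclideanSpace ℝ (Fin d) ≃ₗᵢ[ℝ] EuclideanSpace ℝ (Fin d) :=
    Submodule.reflection (ℝ ∙ (w₀ - w))ᗮ with hfdef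
  have hf : f w₀ = w := Submodule.reflection_sub (by rw [hw₀, hw])
  rw [← f.measurePreserving.integral_comp f.toHomeomorph.measurableEmbedding
    (fun x => |(inner ℝ x w : ℝ)| * Real.exp (-‖x‖^2))]
  have hpt : ∀ x : EuclideanSpace ℝ (Fin d),
      |(inner ℝ (f x) w : ℝ)| * Real.exp (-‖f x‖^2) = |x i₀| * Real.exp (-‖x‖^2) := by
    intro x
    rw [← hf, f.inner_map_map, f.norm_map]
    congr 2
    rw [hw₀def, EuclideanSpace.inner_single_right]
    simp
  simp only [hpt]
  exact gauss_prod d i₀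

variable {E' : Type*} [NormedAddCommGroup E'] [NormedSpace ℝ E'] [MeasurableSpace E']
  [BorelSpace E'] [FiniteDimensional ℝ E'] [Nontrivial E']

section
variable (d : ℕ) (hd : 1 ≤ d)

lemma nontriv (hd : 1 ≤ d) : Nontrivial (EuclideanSpace ℝ (Fin d)) := by
  have : Nonempty (Fin d) := ⟨⟨0, hd⟩⟩
  infer_instance

lemma sphereA (hd : 1 ≤ d) (w : EuclideanSpace ℝ (Fin d)) (hw : ‖w‖ = 1) :
    (∫ ω : sphere (0 : EuclideanSpace ℝ (Fin d)) 1, |(inner ℝ (ω : EuclideanSpace ℝ (Fin d)) w : ℝ)|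
        ∂(volume : Measure (EuclideanSpace ℝ (Fin d))).toSphere)
      * (Real.Gamma (((d:ℝ)+1)/2) / 2) = Real.sqrt π ^ (d - 1) := by
  haveI := nontriv d hd
  rw [← gauss_inner d hd w hw,
    polar volume (fun x : EuclideanSpace ℝ (Fin d) => |(inner ℝ x w : ℝ)| * Real.exp (-‖x‖^2))]
  have hpt : ∀ p : sphere (0 : EuclideanSpace ℝ (Fin d)) 1 × Ioi (0:ℝ),
      |(inner ℝ ((p.2 : ℝ) • (p.1 : EuclideanSpace ℝ (Fin d))) w : ℝ)|
        * Real.exp (-‖(p.2 : ℝ) • (p.1 : EuclideanSpace ℝ (Fin d))‖^2)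
      = |(inner ℝ (p.1 : EuclideanSpace ℝ (Fin d)) w : ℝ)|
        * ((p.2 : ℝ) * Real.exp (-((p.2:ℝ))^2)) := by
    intro p
    have hr : (0:ℝ) < (p.2 : ℝ) := p.2.2
    have hω : ‖(p.1 : EuclideanSpace ℝ (Fin d))‖ = 1 := mem_sphere_zero_iff_norm.mp p.1.2
    rw [real_inner_smul_left, abs_mul, abs_of_pos hr, norm_smul, Real.norm_eq_abs,
      abs_of_pos hr, hω, mul_one]
    ring
  simp only [hpt]
  rw [integral_prod_mul (f := fun ω : sphere (0 : EuclideanSpace ℝ (Fin d)) 1 =>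
      |(inner ℝ (ω : EuclideanSpace ℝ (Fin d)) w : ℝ)|)
    (g := fun r : Ioi (0:ℝ) => (r : ℝ) * Real.exp (-((r:ℝ))^2)), integral_volumeIoiPow _ (fun t => t * Real.exp (-t^2))]
  congr 1
  have : ∀ r ∈ Ioi (0:ℝ), r ^ (Module.finrank ℝ (EuclideanSpace ℝ (Fin d)) - 1)
      * (r * Real.exp (-r^2)) = r ^ d * Real.exp (-r^2) := by
    intro r _
    rw [finrank_euclideanSpace_fin, ← mul_assoc, ← pow_succ, Nat.sub_add_cancel hd]
  rw [setIntegral_congr_fun measurableSet_Ioi this, radial d]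
end

lemma sphereT (d : ℕ) (hd : 1 ≤ d) :
    (((volume : Measure (EuclideanSpace ℝ (Fin d))).toSphere Set.univ).toReal)
      * (Real.Gamma ((d:ℝ)/2) / 2) = Real.sqrt π ^ d := by
  haveI := nontriv d hd
  have hL : ∫ x : EuclideanSpace ℝ (Fin d), Real.exp (-‖x‖^2) = Real.sqrt π ^ d := by
    have := GaussianFourier.integral_rexp_neg_mul_sq_norm (V := EuclideanSpace ℝ (Fin d)) (one_pos)
    simp only [neg_mul, one_mul] at this
    rw [this, finrank_euclideanSpace_fin, div_one, Real.sqrt_eq_rpow,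
      ← Real.rpow_natCast (π ^ ((1:ℝ)/2)) d, ← Real.rpow_mul pi_pos.le]
    congr 1
    ring
  rw [← hL, polar volume (fun x : EuclideanSpace ℝ (Fin d) => Real.exp (-‖x‖^2))]
  have hpt : ∀ p : sphere (0 : EuclideanSpace ℝ (Fin d)) 1 × Ioi (0:ℝ),
      Real.exp (-‖(p.2 : ℝ) • (p.1 : EuclideanSpace ℝ (Fin d))‖^2)
      = (fun _ : sphere (0 : EuclideanSpace ℝ (Fin d)) 1 => (1:ℝ)) p.1
        * (fun r : Ioi (0:ℝ) => Real.exp (-((r:ℝ))^2)) p.2 := by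
    intro p
    have hr : (0:ℝ) < (p.2 : ℝ) := p.2.2
    have hω : ‖(p.1 : EuclideanSpace ℝ (Fin d))‖ = 1 := mem_sphere_zero_iff_norm.mp p.1.2
    simp only [norm_smul, Real.norm_eq_abs, abs_of_pos hr, hω, mul_one, one_mul]
  simp only [hpt]
  rw [integral_prod_mul (f := fun _ : sphere (0 : EuclideanSpace ℝ (Fin d)) 1 => (1:ℝ))
    (g := fun r : Ioi (0:ℝ) => Real.exp (-((r:ℝ))^2)),
    integral_volumeIoiPow _ (fun t => Real.exp (-t^2)), integral_const, smul_eq_mul, mul_one]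
  congr 1
  have h1 : ∀ r ∈ Ioi (0:ℝ), r ^ (Module.finrank ℝ (EuclideanSpace ℝ (Fin d)) - 1)
      * Real.exp (-r^2) = r ^ (d-1) * Real.exp (-r^2) := by
    intro r _; rw [finrank_euclideanSpace_fin]
  rw [setIntegral_congr_fun measurableSet_Ioi h1, radial (d-1)]
  congr 2
  rw [Nat.cast_sub hd]
  norm_num

lemma abs_sgn (t : ℝ) : |sgn t| = 1 := by unfold sgn; split <;> norm_num

lemma sgn_mul (t : ℝ) : sgn t * t = |t| := by
  unfold sgn; split <;> rename_i h
  · rw [abs_of_neg h]; ring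
  · rw [abs_of_nonneg (not_lt.1 h)]; ring

variable {d : ℕ}

lemma part1 (σ : Measure (EuclideanSpace ℝ (Fin d))) [IsProbabilityMeasure σ]
    (hae : ∀ᵐ v ∂σ, ‖v‖ = 1)
    (hinv : ∀ f : EuclideanSpace ℝ (Fin d) ≃ₗᵢ[ℝ] EuclideanSpace ℝ (Fin d), σ.map f = σ)
    (u : EuclideanSpace ℝ (Fin d)) (hu : ‖u‖ = 1) :
    ∫ v, sgn ((inner ℝ v u : ℝ)) • v ∂σ = (∫ v, |(inner ℝ v u : ℝ)| ∂σ) • u := by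
  classical
    have msgn : Measurable sgn :=
    Measurable.ite (measurableSet_lt measurable_id measurable_const)
      measurable_const measurable_const
  have minner : Continuous fun v : EuclideanSpace ℝ (Fin d) => (inner ℝ v u : ℝ) :=
    continuous_id.inner continuous_const
  have hmeas : AEStronglyMeasurable (fun v : EuclideanSpace ℝ (Fin d) => sgn ((inner ℝ v u : ℝ)) • v) σ :=
    ((msgn.comp minner.measurable).smul measurable_id).aestronglyMeasurable
  have hInt : Integrable (fun v : EuclideanSpace ℝ (Fin d) => sgn ((inner ℝ v u : ℝ)) • v) σ := by
    refine Integrable.mono' (integrable_const 1) hmeas ?_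
    filter_upwards [hae] with v hv
    rw [norm_smul, Real.norm_eq_abs, abs_sgn, one_mul, hv]
  set R : EuclideanSpace ℝ (Fin d) ≃ₗᵢ[ℝ] EuclideanSpace ℝ (Fin d) := Submodule.reflection (ℝ ∙ u) with hR
  have hRu : R u = u :=
    Submodule.reflection_mem_subspace_eq_self (Submodule.mem_span_singleton_self u)
  have hRinner : ∀ v : EuclideanSpace ℝ (Fin d), (inner ℝ (R v) u : ℝ) = (inner ℝ v u : ℝ) := fun v => by
    conv_lhs => rw [← hRu]
    exact R.inner_map_map v u
  set I := ∫ v, sgn ((inner ℝ v u : ℝ)) • v ∂σ with hI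
  have step : I = R I := by
    conv_lhs => rw [hI, ← hinv R]
    rw [integral_map R.continuous.aemeasurable]
    · have : ∀ v : EuclideanSpace ℝ (Fin d), sgn ((inner ℝ (R v) u : ℝ)) • (R v)
          = R.toLinearIsometry (sgn ((inner ℝ v u : ℝ)) • v) := by
        intro v
        rw [hRinner v]
        simp [_root_.map_smul]
      simp only [this]
      rw [R.toLinearIsometry.integral_comp_comm]
      rfl
    · rw [hinv R]; exact hmeas
  have hmem : I ∈ (ℝ ∙ u) := (Submodule.reflection_eq_self_iff I).mp step.symm
  obtain ⟨a, ha⟩ := Submodule.mem_span_singleton.mp hmem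
  have hinner_a : (inner ℝ u I : ℝ) = a := by
    rw [← ha, real_inner_smul_right, real_inner_self_eq_norm_sq, hu]
    norm_num
  have hc : (inner ℝ u I : ℝ) = ∫ v, |(inner ℝ v u : ℝ)| ∂σ := by
    rw [hI, ← integral_inner hInt]
    refine integral_congr_ae (Filter.Eventually.of_forall fun v => ?_)
    dsimp only
    rw [real_inner_smul_right, real_inner_comm, sgn_mul]
  rw [← ha, ← hinner_a, hc]

lemma part2 (d : ℕ) (hd : 1 ≤ d) (σ : Measure (EuclideanSpace ℝ (Fin d)))
    [IsProbabilityMeasure σ]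
    (hae : ∀ᵐ v ∂σ, ‖v‖ = 1)
    (hinv : ∀ f : EuclideanSpace ℝ (Fin d) ≃ₗᵢ[ℝ] EuclideanSpace ℝ (Fin d), σ.map f = σ)
    (u : EuclideanSpace ℝ (Fin d)) (hu : ‖u‖ = 1) :
    ∫ v, |(inner ℝ v u : ℝ)| ∂σ
      = Real.Gamma ((d:ℝ)/2) / (Real.sqrt π * Real.Gamma (((d:ℝ)+1)/2)) := by
  haveI := nontriv d hd
  set μS := (volume : Measure (EuclideanSpace ℝ (Fin d))).toSphere with hμS
  set c := ∫ v, |(inner ℝ v u : ℝ)| ∂σ with hc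
  -- step A: the value is the same for every unit vector
  have stepA : ∀ w : EuclideanSpace ℝ (Fin d), ‖w‖ = 1 →
      ∫ v, |(inner ℝ v w : ℝ)| ∂σ = c := by
    intro w hw
    set f : EuclideanSpace ℝ (Fin d) ≃ₗᵢ[ℝ] EuclideanSpace ℝ (Fin d) :=
      Submodule.reflection (ℝ ∙ (u - w))ᗮ with hfdef
    have hf : f u = w := Submodule.reflection_sub (by rw [hu, hw])
    have hcont : ∀ z : EuclideanSpace ℝ (Fin d),
        Continuous fun v : EuclideanSpace ℝ (Fin d) => |(inner ℝ v z : ℝ)| :=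
      fun z => (continuous_id.inner continuous_const).abs
    rw [hc]
    conv_lhs => rw [← hinv f]
    rw [integral_map f.continuous.aemeasurable
      (by rw [hinv f]; exact (hcont w).aestronglyMeasurable)]
    refine integral_congr_ae (Filter.Eventually.of_forall fun v => ?_)
    dsimp only
    conv_lhs => rw [← hf]
    rw [f.inner_map_map]
  -- integrability on the product
  have hbound : ∀ᵐ z ∂(μS.prod σ), ‖z.2‖ = 1 := by
    rw [ae_iff]
    have hset : {z : (sphere (0 : EuclideanSpace ℝ (Fin d)) 1) × EuclideanSpace ℝ (Fin d)
        | ¬ ‖z.2‖ = 1} = Set.univ ×ˢ {v : EuclideanSpace ℝ (Fin d) | ¬ ‖v‖ = 1} := by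
      ext z; simp
    rw [hset, Measure.prod_prod, ae_iff.mp hae, mul_zero]
  have hIntP : Integrable (Function.uncurry fun (ω : sphere (0 : EuclideanSpace ℝ (Fin d)) 1)
      (v : EuclideanSpace ℝ (Fin d)) => |(inner ℝ v (ω : EuclideanSpace ℝ (Fin d)) : ℝ)|)
      (μS.prod σ) := by
    refine Integrable.mono' (integrable_const 1) ?_ ?_
    · exact (Continuous.abs (continuous_snd.inner
        (continuous_subtype_val.comp continuous_fst))).aestronglyMeasurable
    · filter_upwards [hbound] with z hz
      simp only [Function.uncurry]
      rw [Real.norm_eq_abs, abs_abs]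
      calc |(inner ℝ z.2 (z.1 : EuclideanSpace ℝ (Fin d)) : ℝ)|
          ≤ ‖z.2‖ * ‖(z.1 : EuclideanSpace ℝ (Fin d))‖ := abs_real_inner_le_norm _ _
        _ = 1 := by rw [hz, mem_sphere_zero_iff_norm.mp z.1.2, one_mul]
  -- Fubini
  have swap := integral_integral_swap hIntP
  have lhs_eq : ∫ (ω : sphere (0 : EuclideanSpace ℝ (Fin d)) 1),
      ∫ v, |(inner ℝ v (ω : EuclideanSpace ℝ (Fin d)) : ℝ)| ∂σ ∂μS = (μS univ).toReal * c := by
    rw [integral_congr_ae (Filter.Eventually.of_forall fun ω => stepA _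
      (mem_sphere_zero_iff_norm.mp ω.2)), integral_const, smul_eq_mul, measureReal_def]
  -- value of the inner sphere integral
  have hΓ1 : 0 < Real.Gamma (((d:ℝ)+1)/2) := Real.Gamma_pos_of_pos (by positivity)
  have hΓ0 : 0 < Real.Gamma ((d:ℝ)/2) := Real.Gamma_pos_of_pos (by positivity)
  set A := Real.sqrt π ^ (d - 1) / (Real.Gamma (((d:ℝ)+1)/2) / 2) with hA
  have hAval : ∀ w : EuclideanSpace ℝ (Fin d), ‖w‖ = 1 →
      ∫ (ω : sphere (0 : EuclideanSpace ℝ (Fin d)) 1),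
        |(inner ℝ w (ω : EuclideanSpace ℝ (Fin d)) : ℝ)| ∂μS = A := by
    intro w hw
    have := sphereA d hd w hw
    rw [hA, ← this, mul_div_assoc, div_self (by positivity), mul_one]
    refine integral_congr_ae (Filter.Eventually.of_forall fun ω => ?_)
    dsimp only
    rw [real_inner_comm]
  have rhs_eq : ∫ v, (∫ (ω : sphere (0 : EuclideanSpace ℝ (Fin d)) 1),
      |(inner ℝ v (ω : EuclideanSpace ℝ (Fin d)) : ℝ)| ∂μS) ∂σ = A := by
    rw [integral_congr_ae ?_, integral_const, smul_eq_mul, measureReal_def, measure_univ, ENNReal.toReal_one,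
      one_mul]
    · filter_upwards [hae] with v hv
      exact hAval v hv
  have key : (μS univ).toReal * c = A := by rw [← lhs_eq, swap, rhs_eq]
  -- compute (μS univ).toReal from sphereT
  have hT := sphereT d hd
  have hTval : (μS univ).toReal = Real.sqrt π ^ d / (Real.Gamma ((d:ℝ)/2) / 2) :=
    (eq_div_iff (by positivity)).mpr hT
  have hTpos : 0 < (μS univ).toReal := by
    rw [hTval]; positivity
  have hd' : Real.sqrt π ^ d = Real.sqrt π ^ (d-1) * Real.sqrt π := by
    rw [← pow_succ, Nat.sub_add_cancel hd]
  have hc' : c = A / (μS univ).toReal := by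
    rw [eq_div_iff hTpos.ne', mul_comm]
    exact key
  rw [hc', hA, hTval, hd']
  have hπ : (0:ℝ) < Real.sqrt π := Real.sqrt_pos.mpr pi_pos
  field_simp

/-- for the uniform probability measure `σ` on the unit sphere
`S^{d−1} ⊂ ℝ^d` and any unit vector `u`,
`∫ sign(⟨v, u⟩)·v dσ(v) = (Γ(d/2)/(√π·Γ((d+1)/2)))·u`. -/
theorem sphere_sign_integral (d : ℕ) (hd : 1 ≤ d)
    (σ : Measure (EuclideanSpace ℝ (Fin d))) (hσ : IsUniformSphereMeasure σ)
    (u : EuclideanSpace ℝ (Fin d)) (hu : ‖u‖ = 1) :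
    ∫ v, sgn ((inner ℝ v u : ℝ)) • v ∂σ =
      (Real.Gamma ((d : ℝ) / 2) /
        (Real.sqrt Real.pi * Real.Gamma (((d : ℝ) + 1) / 2))) • u := by
  obtain ⟨hprob, hae, hinv⟩ := hσ
  haveI := hprob
  rw [part1 σ hae hinv u hu, part2 d hd σ hae hinv u hu]
end
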